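/- arXiv:2407.16588 — 2 statements merged into one kernel-verified Lean document; each statement's English description precedes it below -/
import Mathlib

section
/- (Conflict rule 4) Let P ⊆ V be a k-defective clique, lb a non-negative integer, and u, v ∈ V \ P distinct with {u,v} ∈ E. Define w(x) = |P| − |N(x) ∩ P| and r(P) = k − |E(complement of G[P])|. If |N(u) ∩ N(v) ∩ (V \ P)| ≤ lb − (|P| + r(P) − w(u) − w(v) + 2), then every k-defective clique Q with P ∪ {u,v} ⊆ Q satisfies |Q| ≤ lb. -/
open Finset

variable {V : Type*} [Fintype V] [DecidableEq V]

/-- The set of non-edges (missing edges) of the subgraph of `G` induced by `S`,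
as a finset of unordered pairs. -/
def nonEdges (G : SimpleGraph V) [DecidableRel G.Adj] (S : Finset V) : Finset (Sym2 V) :=
  ((S ×ˢ S).filter fun p => p.1 ≠ p.2 ∧ ¬ G.Adj p.1 p.2).image fun p => s(p.1, p.2)

/-- `S` is a `k`-defective clique: the complement of `G[S]` has at most `k` edges. -/
def IsDefClique (G : SimpleGraph V) [DecidableRel G.Adj] (k : ℕ) (S : Finset V) : Prop :=
  (nonEdges G S).card ≤ k

/-- `D` is a `k`-defective set: it is a `k`-defective clique in which every vertex
is non-adjacent to at least one other vertex of `D`. -/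
def IsDefSet (G : SimpleGraph V) [DecidableRel G.Adj] (k : ℕ) (D : Finset V) : Prop :=
  (∀ u ∈ D, ∃ v ∈ D, v ≠ u ∧ ¬ G.Adj u v) ∧ IsDefClique G k D

set_option linter.unusedSectionVars false in
lemma mem_nonEdges {G : SimpleGraph V} [DecidableRel G.Adj] {S : Finset V} {a b : V} :
    s(a, b) ∈ nonEdges G S ↔ a ∈ S ∧ b ∈ S ∧ a ≠ b ∧ ¬ G.Adj a b := by
  simp only [nonEdges, mem_image, mem_filter, mem_product, Sym2.eq, Sym2.rel_iff', Prod.mk.injEq,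
    Prod.swap_prod_mk]
  constructor
  · rintro ⟨⟨c, d⟩, ⟨⟨hc, hd⟩, hne, hna⟩, (⟨rfl, rfl⟩ | ⟨rfl, rfl⟩)⟩
    · exact ⟨hc, hd, hne, hna⟩
    · exact ⟨hd, hc, hne.symm, fun hab => hna (hab.symm)⟩
  · rintro ⟨ha, hb, hne, hna⟩
    exact ⟨(a, b), ⟨⟨ha, hb⟩, hne, hna⟩, Or.inl ⟨rfl, rfl⟩⟩

/-- Conflict rule 4: for adjacent `u, v ∈ V \ P`, if
`|N(u) ∩ N(v) ∩ (V \ P)| ≤ lb - (|P| + r(P) - w(u) - w(v) + 2)`,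
then every `k`-defective clique `Q ⊇ P ∪ {u,v}` satisfies `|Q| ≤ lb`. -/
theorem conflict_rule_four (G : SimpleGraph V) [DecidableRel G.Adj] (k : ℕ)
    (P : Finset V) (hP : IsDefClique G k P) (lb : ℕ) (u v : V) (huv : u ≠ v)
    (hu : u ∉ P) (hv : v ∉ P) (hadj : G.Adj u v)
    (w : V → ℕ) (hw : ∀ x, w x = P.card - (G.neighborFinset x ∩ P).card)
    (h : (((G.neighborFinset u ∩ G.neighborFinset v) \ P).card : ℤ)
        ≤ (lb : ℤ) - ((P.card : ℤ) + ((k : ℤ) - ((nonEdges G P).card : ℤ))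
            - (w u : ℤ) - (w v : ℤ) + 2)) :
    ∀ Q : Finset V, IsDefClique G k Q → P ⊆ Q → u ∈ Q → v ∈ Q → Q.card ≤ lb := by
  intro Q hQ hPQ huQ hvQ
  classical
  set A : Finset V := Q \ insert u (insert v P) with hA
  set B : Finset V := A.filter (fun x => G.Adj u x ∧ G.Adj v x) with hBdef
  set C : Finset V := A.filter (fun x => ¬ (G.Adj u x ∧ G.Adj v x)) with hCdef
  have hAmem : ∀ x ∈ A, x ∈ Q ∧ x ≠ u ∧ x ≠ v ∧ x ∉ P := by
    intro x hx
    simp only [hA, mem_sdiff, mem_insert, not_or] at hx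
    exact ⟨hx.1, hx.2.1, hx.2.2.1, hx.2.2.2⟩
  -- cardinality decomposition of Q
  have hsub : insert u (insert v P) ⊆ Q := by
    intro x hx
    simp only [mem_insert] at hx
    rcases hx with rfl | rfl | hx
    · exact huQ
    · exact hvQ
    · exact hPQ hx
  have hins_card : (insert u (insert v P)).card = P.card + 2 := by
    rw [card_insert_of_notMem (by simp [huv, hu]), card_insert_of_notMem hv]
  have hAcard : A.card + (P.card + 2) = Q.card := by
    rw [hA, card_sdiff_of_subset hsub, hins_card]
    exact Nat.sub_add_cancel (by calc P.card + 2 = (insert u (insert v P)).card := hins_card.symm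
                                      _ ≤ Q.card := card_le_card hsub)
  have hBC : B.card + C.card = A.card := card_filter_add_card_filter_not _
  -- B is contained in the common neighborhood minus P
  have hBsub : B ⊆ (G.neighborFinset u ∩ G.neighborFinset v) \ P := by
    intro x hx
    rw [hBdef, mem_filter] at hx
    obtain ⟨hxA, hux, hvx⟩ := hx
    simp only [mem_sdiff, mem_inter, SimpleGraph.mem_neighborFinset]
    exact ⟨⟨hux, hvx⟩, (hAmem x hxA).2.2.2⟩
  have hBcard : B.card ≤ ((G.neighborFinset u ∩ G.neighborFinset v) \ P).card :=
    card_le_card hBsub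
  -- the four disjoint families of non-edges of Q
  set S0 : Finset (Sym2 V) := nonEdges G P with hS0
  set S1 : Finset (Sym2 V) := (P.filter (fun x => ¬ G.Adj u x)).image (fun x => s(u, x)) with hS1
  set S2 : Finset (Sym2 V) := (P.filter (fun x => ¬ G.Adj v x)).image (fun x => s(v, x)) with hS2
  set S3 : Finset (Sym2 V) :=
    C.image (fun x => if G.Adj u x then s(v, x) else s(u, x)) with hS3
  have hS1mem : ∀ z ∈ S1, ∃ x ∈ P, ¬ G.Adj u x ∧ z = s(u, x) := by
    intro z hz
    rw [hS1, mem_image] at hz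
    obtain ⟨x, hx, rfl⟩ := hz
    rw [mem_filter] at hx
    exact ⟨x, hx.1, hx.2, rfl⟩
  have hS2mem : ∀ z ∈ S2, ∃ x ∈ P, ¬ G.Adj v x ∧ z = s(v, x) := by
    intro z hz
    rw [hS2, mem_image] at hz
    obtain ⟨x, hx, rfl⟩ := hz
    rw [mem_filter] at hx
    exact ⟨x, hx.1, hx.2, rfl⟩
  have hS3mem : ∀ z ∈ S3, ∃ x ∈ C,
      (¬ G.Adj u x ∧ z = s(u, x)) ∨ (¬ G.Adj v x ∧ z = s(v, x)) := by
    intro z hz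
    rw [hS3, mem_image] at hz
    obtain ⟨x, hx, rfl⟩ := hz
    have hx' := hx
    rw [hCdef, mem_filter] at hx'
    by_cases hux : G.Adj u x
    · refine ⟨x, hx, Or.inr ⟨fun hvx => hx'.2 ⟨hux, hvx⟩, ?_⟩⟩
      simp [hux]
    · exact ⟨x, hx, Or.inl ⟨hux, by simp [hux]⟩⟩
  -- subsets of nonEdges G Q
  have hsub0 : S0 ⊆ nonEdges G Q := by
    intro z hz
    induction z using Sym2.ind with
    | _ a b =>
      rw [hS0, mem_nonEdges] at hz
      rw [mem_nonEdges]
      exact ⟨hPQ hz.1, hPQ hz.2.1, hz.2.2⟩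
  have hsub1 : S1 ⊆ nonEdges G Q := by
    intro z hz
    obtain ⟨x, hxP, hna, rfl⟩ := hS1mem z hz
    rw [mem_nonEdges]
    exact ⟨huQ, hPQ hxP, fun e => hu (e ▸ hxP), hna⟩
  have hsub2 : S2 ⊆ nonEdges G Q := by
    intro z hz
    obtain ⟨x, hxP, hna, rfl⟩ := hS2mem z hz
    rw [mem_nonEdges]
    exact ⟨hvQ, hPQ hxP, fun e => hv (e ▸ hxP), hna⟩
  have hCA : C ⊆ A := filter_subset _ _
  have hsub3 : S3 ⊆ nonEdges G Q := by
    intro z hz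
    obtain ⟨x, hxC, hcase⟩ := hS3mem z hz
    obtain ⟨hxQ, hxu, hxv, hxP⟩ := hAmem x (hCA hxC)
    rcases hcase with ⟨hna, rfl⟩ | ⟨hna, rfl⟩
    · rw [mem_nonEdges]; exact ⟨huQ, hxQ, fun e => hxu e.symm, hna⟩
    · rw [mem_nonEdges]; exact ⟨hvQ, hxQ, fun e => hxv e.symm, hna⟩
  -- pairwise disjointness
  have hd01 : Disjoint S0 S1 := by
    rw [disjoint_left]
    intro z hz0 hz1
    obtain ⟨x, hxP, _, rfl⟩ := hS1mem z hz1
    rw [hS0, mem_nonEdges] at hz0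
    exact hu hz0.1
  have hd02 : Disjoint S0 S2 := by
    rw [disjoint_left]
    intro z hz0 hz1
    obtain ⟨x, hxP, _, rfl⟩ := hS2mem z hz1
    rw [hS0, mem_nonEdges] at hz0
    exact hv hz0.1
  have hd12 : Disjoint S1 S2 := by
    rw [disjoint_left]
    intro z hz1 hz2
    obtain ⟨x, hxP, _, rfl⟩ := hS1mem z hz1
    obtain ⟨y, hyP, _, he⟩ := hS2mem _ hz2
    rw [Sym2.eq_iff] at he
    rcases he with ⟨he1, he2⟩ | ⟨he1, he2⟩
    · exact huv he1
    · exact hu (he1 ▸ hyP)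
  have hd03 : Disjoint S0 S3 := by
    rw [disjoint_left]
    intro z hz0 hz3
    obtain ⟨x, hxC, hcase⟩ := hS3mem z hz3
    have hxP := (hAmem x (hCA hxC)).2.2.2
    rcases hcase with ⟨_, rfl⟩ | ⟨_, rfl⟩
    · rw [hS0, mem_nonEdges] at hz0; exact hu hz0.1
    · rw [hS0, mem_nonEdges] at hz0; exact hv hz0.1
  have hd13 : Disjoint S1 S3 := by
    rw [disjoint_left]
    intro z hz1 hz3
    obtain ⟨x, hxP, _, rfl⟩ := hS1mem z hz1
    obtain ⟨y, hyC, hcase⟩ := hS3mem _ hz3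
    obtain ⟨_, hyu, hyv, hyP⟩ := hAmem y (hCA hyC)
    rcases hcase with ⟨_, he⟩ | ⟨_, he⟩ <;>
      rw [Sym2.eq_iff] at he <;>
      rcases he with ⟨he1, he2⟩ | ⟨he1, he2⟩
    · exact hyP (he2 ▸ hxP)
    · exact hyu he1.symm
    · exact hyP (he2 ▸ hxP)
    · exact hyu he1.symm
  have hd23 : Disjoint S2 S3 := by
    rw [disjoint_left]
    intro z hz2 hz3
    obtain ⟨x, hxP, _, rfl⟩ := hS2mem z hz2
    obtain ⟨y, hyC, hcase⟩ := hS3mem _ hz3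
    obtain ⟨_, hyu, hyv, hyP⟩ := hAmem y (hCA hyC)
    rcases hcase with ⟨_, he⟩ | ⟨_, he⟩ <;>
      rw [Sym2.eq_iff] at he <;>
      rcases he with ⟨he1, he2⟩ | ⟨he1, he2⟩
    · exact hyP (he2 ▸ hxP)
    · exact hyv he1.symm
    · exact hyP (he2 ▸ hxP)
    · exact hyv he1.symm
  -- cardinalities
  have hS1card : S1.card = (P.filter (fun x => ¬ G.Adj u x)).card := by
    rw [hS1]
    apply card_image_of_injOn
    intro x hx y hy he
    rw [mem_coe, mem_filter] at hx hy
    rw [Sym2.eq_iff] at he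
    rcases he with ⟨he1, he2⟩ | ⟨he1, he2⟩
    · exact he2
    · exact absurd (he1 ▸ hy.1) hu
  have hS2card : S2.card = (P.filter (fun x => ¬ G.Adj v x)).card := by
    rw [hS2]
    apply card_image_of_injOn
    intro x hx y hy he
    rw [mem_coe, mem_filter] at hx hy
    rw [Sym2.eq_iff] at he
    rcases he with ⟨he1, he2⟩ | ⟨he1, he2⟩
    · exact he2
    · exact absurd (he1 ▸ hy.1) hv
  have hS3card : S3.card = C.card := by
    rw [hS3]
    apply card_image_of_injOn
    intro x hx y hy he
    rw [mem_coe] at hx hy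
    obtain ⟨_, hxu, hxv, _⟩ := hAmem x (hCA hx)
    obtain ⟨_, hyu, hyv, _⟩ := hAmem y (hCA hy)
    by_cases h1 : G.Adj u x <;> by_cases h2 : G.Adj u y <;>
      simp only [h1, h2, if_pos, if_neg, if_true, if_false] at he <;>
      rw [Sym2.eq_iff] at he <;>
      rcases he with ⟨he1, he2⟩ | ⟨he1, he2⟩
    · exact he2
    · exact absurd he2 hxv
    · exact absurd he1 huv.symm
    · exact absurd he1.symm hyv
    · exact absurd he1 huv
    · exact absurd he1.symm hyu
    · exact he2
    · exact absurd he2 hxu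
  -- relate filter cards to w
  have hNP : ∀ x : V, G.neighborFinset x ∩ P = P.filter (fun y => G.Adj x y) := by
    intro x
    ext y
    simp [mem_inter, SimpleGraph.mem_neighborFinset, and_comm]
  have hwu : w u + (P.filter (fun x => G.Adj u x)).card = P.card := by
    rw [hw u, hNP u]
    have := card_filter_le P (fun y => G.Adj u y)
    omega
  have hwv : w v + (P.filter (fun x => G.Adj v x)).card = P.card := by
    rw [hw v, hNP v]
    have := card_filter_le P (fun y => G.Adj v y)
    omega
  have hfu : (P.filter (fun x => G.Adj u x)).card + (P.filter (fun x => ¬ G.Adj u x)).card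
      = P.card := card_filter_add_card_filter_not _
  have hfv : (P.filter (fun x => G.Adj v x)).card + (P.filter (fun x => ¬ G.Adj v x)).card
      = P.card := card_filter_add_card_filter_not _
  -- the union bound
  have hunion : S0.card + S1.card + S2.card + S3.card ≤ (nonEdges G Q).card := by
    have d1 : Disjoint (S0 ∪ S1) S2 := by
      rw [disjoint_union_left]; exact ⟨hd02, hd12⟩
    have d2 : Disjoint (S0 ∪ S1 ∪ S2) S3 := by
      rw [disjoint_union_left, disjoint_union_left]; exact ⟨⟨hd03, hd13⟩, hd23⟩
    calc S0.card + S1.card + S2.card + S3.card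
        = (S0 ∪ S1 ∪ S2 ∪ S3).card := by
          rw [card_union_of_disjoint d2, card_union_of_disjoint d1,
            card_union_of_disjoint hd01]
      _ ≤ (nonEdges G Q).card := by
          apply card_le_card
          intro z hz
          simp only [mem_union] at hz
          rcases hz with ((hz | hz) | hz) | hz
          · exact hsub0 hz
          · exact hsub1 hz
          · exact hsub2 hz
          · exact hsub3 hz
  have hk : (nonEdges G Q).card ≤ k := hQ
  have hPk : (nonEdges G P).card ≤ k := hP
  -- final arithmetic
  omega
end

section
/- (Soundness of the OPT bound) Let P ⊆ V be a k-defective clique with r(P) = k − |E(complement of G[P])|, and let V \ P be partitioned into independent sets Π_1, …, Π_χ. For every k-defective clique Q with P ⊆ Q, setting S_i = Q ∩ Π_i, we have Σ_{i=1}^{χ} ( C(|S_i|,2) + Σ_{u∈S_i} w(u) ) ≤ r(P), where w(u) = |P| − |N(u) ∩ P|. In particular |Q| = |P| + Σ_i |S_i| is at most the optimal value of the corresponding optimization problem. -/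
/-!
The non-edges of `G[Q]` fall into three disjoint families: those inside `P`, those inside
`Q \ P`, and those joining a vertex `u ∈ Q \ P` to one of its `w(u)` non-neighbours in `P`.
Since each `S_i` is independent, the second family contains the `C(|S_i|, 2)` pairs inside
every `S_i`, and these are disjoint for distinct `i`. Summing, `|E(co-G[P])| + Σ_i (C(|S_i|, 2)
+ Σ_{u ∈ S_i} w(u)) ≤ |E(co-G[Q])| ≤ k`.
-/

open Finset

variable {V : Type*} [Fintype V] [DecidableEq V]

section NonEdges

-- A fresh `V`, so that these lemmas do not carry the `[Fintype V]` of the definitions above.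
variable {V : Type*} [DecidableEq V] {G : SimpleGraph V} [DecidableRel G.Adj]

theorem mk_mem_nonEdges {S : Finset V} {u v : V} :
    s(u, v) ∈ nonEdges G S ↔ u ∈ S ∧ v ∈ S ∧ u ≠ v ∧ ¬ G.Adj u v := by
  simp only [nonEdges, mem_image, mem_filter, mem_product, Prod.exists, Sym2.eq_iff]
  constructor
  · rintro ⟨a, b, ⟨⟨ha, hb⟩, hab, hadj⟩, ⟨rfl, rfl⟩ | ⟨rfl, rfl⟩⟩
    · exact ⟨ha, hb, hab, hadj⟩
    · exact ⟨hb, ha, hab.symm, fun h => hadj h.symm⟩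
  · rintro ⟨hu, hv, huv, hadj⟩
    exact ⟨u, v, ⟨⟨hu, hv⟩, huv, hadj⟩, Or.inl ⟨rfl, rfl⟩⟩

theorem nonEdges_mono {S T : Finset V} (h : S ⊆ T) : nonEdges G S ⊆ nonEdges G T := by
  intro e he
  induction e using Sym2.ind with
  | h a b =>
    obtain ⟨ha, hb, hab⟩ := mk_mem_nonEdges.1 he
    exact mk_mem_nonEdges.2 ⟨h ha, h hb, hab⟩

theorem disjoint_nonEdges {A B : Finset V} (h : Disjoint A B) :
    Disjoint (nonEdges G A) (nonEdges G B) := by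
  refine disjoint_left.2 fun e hA hB => ?_
  induction e using Sym2.ind with
  | h a b => exact disjoint_left.1 h (mk_mem_nonEdges.1 hA).1 (mk_mem_nonEdges.1 hB).1

theorem card_nonEdges_of_isIndepSet {S : Finset V} (hS : G.IsIndepSet S) :
    (nonEdges G S).card = S.card.choose 2 := by
  have hoffDiag : (S ×ˢ S).filter (fun p => p.1 ≠ p.2 ∧ ¬ G.Adj p.1 p.2) = S.offDiag := by
    ext ⟨a, b⟩
    simp only [mem_filter, mem_product, mem_offDiag]
    exact ⟨fun h => ⟨h.1.1, h.1.2, h.2.1⟩,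
      fun h => ⟨⟨h.1, h.2.1⟩, h.2.2, hS h.1 h.2.1 h.2.2⟩⟩
  rw [nonEdges, hoffDiag]
  exact Sym2.card_image_offDiag S

theorem sum_card_nonEdges_le_card_nonEdges_biUnion {ι : Type*} {s : Finset ι}
    {S : ι → Finset V} (hS : (s : Set ι).PairwiseDisjoint S) :
    ∑ i ∈ s, (nonEdges G (S i)).card ≤ (nonEdges G (s.biUnion S)).card := by
  rw [← card_biUnion fun i hi j hj hij => disjoint_nonEdges (hS hi hj hij)]
  exact card_le_card <| biUnion_subset.2 fun i hi => nonEdges_mono (subset_biUnion_of_mem S hi)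

variable (G) in
def crossNonEdges (A : Finset V) (u : V) : Finset (Sym2 V) :=
  (A.filter (¬ G.Adj u ·)).image (s(u, ·))

theorem card_crossNonEdges (A : Finset V) (u : V) [Fintype (G.neighborSet u)] :
    (crossNonEdges G A u).card = A.card - (G.neighborFinset u ∩ A).card := by
  have hfilter : A.filter (¬ G.Adj u ·) = A \ G.neighborFinset u := by ext; simp
  rw [crossNonEdges, card_image_of_injective _ fun p q h => Sym2.congr_right.1 h, hfilter,
    card_sdiff]

theorem crossNonEdges_subset_sdiff {A B : Finset V} (hAB : Disjoint A B) {u : V} (hu : u ∈ B) :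
    crossNonEdges G A u ⊆ nonEdges G (A ∪ B) \ (nonEdges G A ∪ nonEdges G B) := by
  intro e he
  obtain ⟨p, hp, rfl⟩ := mem_image.1 he
  obtain ⟨hpA, hpu⟩ := mem_filter.1 hp
  have huA : u ∉ A := disjoint_right.1 hAB hu
  have hpB : p ∉ B := disjoint_left.1 hAB hpA
  simp only [mem_sdiff, mem_union, mk_mem_nonEdges]
  refine ⟨⟨Or.inr hu, Or.inl hpA, fun h => huA (h ▸ hpA), hpu⟩, ?_⟩
  tauto

theorem pairwiseDisjoint_crossNonEdges {A B : Finset V} (hAB : Disjoint A B) :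
    (B : Set V).PairwiseDisjoint (crossNonEdges G A) := by
  intro u hu v _ huv
  refine disjoint_left.2 fun e heu hev => ?_
  obtain ⟨p, -, rfl⟩ := mem_image.1 heu
  obtain ⟨q, hq, hqp⟩ := mem_image.1 hev
  rcases Sym2.eq_iff.1 hqp with ⟨rfl, -⟩ | ⟨-, rfl⟩
  · exact huv rfl
  · exact disjoint_left.1 hAB (mem_filter.1 hq).1 (mem_coe.1 hu)

theorem card_nonEdges_add_sum_card_crossNonEdges_le {A B : Finset V} (hAB : Disjoint A B) :
    (nonEdges G A).card + (nonEdges G B).card + ∑ u ∈ B, (crossNonEdges G A u).card ≤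
      (nonEdges G (A ∪ B)).card := by
  have hsub : nonEdges G A ∪ nonEdges G B ⊆ nonEdges G (A ∪ B) :=
    union_subset (nonEdges_mono subset_union_left) (nonEdges_mono subset_union_right)
  calc (nonEdges G A).card + (nonEdges G B).card + ∑ u ∈ B, (crossNonEdges G A u).card
      = (nonEdges G A ∪ nonEdges G B).card + (B.biUnion (crossNonEdges G A)).card := by
        rw [card_union_of_disjoint (disjoint_nonEdges hAB),
          card_biUnion (pairwiseDisjoint_crossNonEdges hAB)]
    _ ≤ (nonEdges G A ∪ nonEdges G B).card +
        (nonEdges G (A ∪ B) \ (nonEdges G A ∪ nonEdges G B)).card := by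
        gcongr
        exact biUnion_subset.2 fun u hu => crossNonEdges_subset_sdiff hAB hu
    _ = (nonEdges G (A ∪ B)).card := by rw [add_comm, card_sdiff_add_card_eq_card hsub]

end NonEdges

theorem opt_bound_sound_general (G : SimpleGraph V) [DecidableRel G.Adj] (k : ℕ) (P : Finset V)
    (χ : ℕ) (Parts : Fin χ → Finset V)
    (hdisj : ∀ i j, i ≠ j → Disjoint (Parts i) (Parts j))
    (hcover : Finset.univ \ P = Finset.univ.biUnion Parts)
    (hind : ∀ i, ∀ u ∈ Parts i, ∀ v ∈ Parts i, u ≠ v → ¬ G.Adj u v)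
    (Q : Finset V) (hQ : IsDefClique G k Q) (hPQ : P ⊆ Q) :
    (∑ i : Fin χ, ((Q ∩ Parts i).card.choose 2 +
        ∑ u ∈ Q ∩ Parts i, (P.card - (G.neighborFinset u ∩ P).card))
      ≤ k - (nonEdges G P).card) ∧
      Q.card = P.card + ∑ i : Fin χ, (Q ∩ Parts i).card := by
  set S : Fin χ → Finset V := fun i => Q ∩ Parts i
  have hS : ((univ : Finset (Fin χ)) : Set (Fin χ)).PairwiseDisjoint S := fun i _ j _ hij =>
    (hdisj i j hij).mono inter_subset_right inter_subset_right
  have hQP : univ.biUnion S = Q \ P := by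
    rw [← inter_biUnion, ← hcover, ← compl_eq_univ_sdiff, sdiff_eq_inter_compl]
  have hpairs : ∑ i, (S i).card.choose 2 ≤ (nonEdges G (Q \ P)).card := by
    have hindS (i : Fin χ) : G.IsIndepSet (S i : Set V) := fun u hu v hv =>
      hind i u (mem_inter.1 hu).2 v (mem_inter.1 hv).2
    rw [← hQP]
    simpa only [card_nonEdges_of_isIndepSet (hindS _)] using
      sum_card_nonEdges_le_card_nonEdges_biUnion (G := G) hS
  have hcross : ∑ u ∈ Q \ P, (crossNonEdges G P u).card =
      ∑ i, ∑ u ∈ S i, (P.card - (G.neighborFinset u ∩ P).card) := by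
    simp only [← hQP, sum_biUnion hS, card_crossNonEdges]
  have hsplit := card_nonEdges_add_sum_card_crossNonEdges_le (G := G)
    (sdiff_disjoint.symm : Disjoint P (Q \ P))
  rw [union_sdiff_of_subset hPQ] at hsplit
  have hbound : ∑ i, ((S i).card.choose 2 +
      ∑ u ∈ S i, (P.card - (G.neighborFinset u ∩ P).card)) + (nonEdges G P).card ≤ k := by
    rw [sum_add_distrib]
    unfold IsDefClique at hQ
    omega
  refine ⟨Nat.le_sub_of_add_le hbound, ?_⟩
  rw [← card_sdiff_add_card_eq_card hPQ, ← hQP, card_biUnion hS, add_comm]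

/-- Soundness of the OPT bound: with `V \ P` partitioned into independent sets and
`S_i = Q ∩ Parts i` for a `k`-defective clique `Q ⊇ P`, the sets `S_i` satisfy the
packing-and-coloring constraint, and `|Q| = |P| + Σ_i |S_i|`. -/
theorem opt_bound_sound (G : SimpleGraph V) [DecidableRel G.Adj] (k : ℕ) (P : Finset V)
    (hP : IsDefClique G k P) (χ : ℕ) (Parts : Fin χ → Finset V)
    (hdisj : ∀ i j, i ≠ j → Disjoint (Parts i) (Parts j))
    (hcover : Finset.univ \ P = Finset.univ.biUnion Parts)
    (hind : ∀ i, ∀ u ∈ Parts i, ∀ v ∈ Parts i, u ≠ v → ¬ G.Adj u v)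
    (Q : Finset V) (hQ : IsDefClique G k Q) (hPQ : P ⊆ Q) :
    (∑ i : Fin χ, ((Q ∩ Parts i).card.choose 2 +
        ∑ u ∈ Q ∩ Parts i, (P.card - (G.neighborFinset u ∩ P).card))
      ≤ k - (nonEdges G P).card) ∧
      Q.card = P.card + ∑ i : Fin χ, (Q ∩ Parts i).card :=
  opt_bound_sound_general G k P χ Parts hdisj hcover hind Q hQ hPQ
end
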